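/- Let w satisfy Assumption (W), let h(x) = ∫_ℝ e^{xz} w'(Φ(z)) φ(z) dz, let T > 0, γ ∈ ℝ and θ ∈ ℝ. Suppose there exists a continuous function Y:[0,T]→ℝ with Y(T) = 0, Y(t) > 0 for all t∈[0,T), differentiable on [0,T) with Y'(t) = −θ² [1 + h'(−γ√(Y(t)))/(h(−γ√(Y(t)))·√(Y(t)))]^{−2} for all t∈[0,T). Then θ ≠ 0 and h'(0) = 0. -/

import Mathlib

open MeasureTheory Set Filter Topology

/-- The standard normal density φ. -/
noncomputable def stdGaussianPdf (z : ℝ) : ℝ :=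
  (Real.sqrt (2 * Real.pi))⁻¹ * Real.exp (-(z ^ 2) / 2)

/-- The standard normal cumulative distribution function Φ. -/
noncomputable def stdGaussianCdf (x : ℝ) : ℝ :=
  ∫ z in Set.Iic x, stdGaussianPdf z

/-- Assumption (W) on a probability weighting function `w` with derivative `w'`. -/
structure AssumptionW (w w' : ℝ → ℝ) : Prop where
  mono : StrictMonoOn w (Set.Icc 0 1)
  deriv : ∀ p ∈ Set.Icc (0:ℝ) 1, HasDerivWithinAt w (w' p) (Set.Icc 0 1) p
  contDeriv : ContinuousOn w' (Set.Icc 0 1)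
  zero : w 0 = 0
  one : w 1 = 1
  growth : ∃ c > 0, ∃ α ∈ Set.Ioo (-1 : ℝ) 0,
    ∀ p ∈ Set.Ioo (0:ℝ) 1, w' p ≤ c * (p ^ α + (1 - p) ^ α)

/-- `hInt w' x = ∫_ℝ e^{xz} w'(Φ(z)) φ(z) dz`. -/
noncomputable def hInt (w' : ℝ → ℝ) (x : ℝ) : ℝ :=
  ∫ z, Real.exp (x * z) * w' (stdGaussianCdf z) * stdGaussianPdf z

/-
If θ = 0 the equation forces Y to be constant, contradicting Y(0) > 0 = Y(T).
If h'(0) ≠ 0, put q(r) = h'(-γr)/h(-γr); then q(0) = h'(0)/h(0) ≠ 0 because h(0) > 0, and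
with r = √Y the right-hand side of the equation is -θ² r² / (r + q(r))², which is O(Y) as
Y → 0. So Y' ≥ -C Y near T: Y(t) e^{Ct} is nondecreasing there and Y cannot reach 0 at T.
What is needed about h (finiteness, differentiability, continuity of h') comes from the
Gaussian tail of the distorted density w'(Φ(z)) φ(z) under Assumption (W).
-/

open ProbabilityTheory

section Gaussian

lemma stdGaussianPdf_eq_gaussianPDFReal : stdGaussianPdf = gaussianPDFReal 0 1 := by
  ext z
  simp [stdGaussianPdf, gaussianPDFReal]

lemma stdGaussianPdf_pos (z : ℝ) : 0 < stdGaussianPdf z := by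
  unfold stdGaussianPdf
  positivity

lemma continuous_stdGaussianPdf : Continuous stdGaussianPdf := by
  unfold stdGaussianPdf
  fun_prop

lemma integrable_stdGaussianPdf : Integrable stdGaussianPdf := by
  rw [stdGaussianPdf_eq_gaussianPDFReal]
  exact integrable_gaussianPDFReal 0 1

lemma stdGaussianPdf_le_of_abs_le {u c : ℝ} (h : |u| ≤ c) :
    stdGaussianPdf c ≤ stdGaussianPdf u := by
  have hsq : u ^ 2 ≤ c ^ 2 := sq_le_sq' (by linarith [neg_abs_le u]) (le_trans (le_abs_self u) h)
  unfold stdGaussianPdf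
  exact mul_le_mul_of_nonneg_left (Real.exp_le_exp.2 (by linarith)) (by positivity)

lemma stdGaussianCdf_sub (a b : ℝ) :
    stdGaussianCdf b - stdGaussianCdf a = ∫ u in a..b, stdGaussianPdf u :=
  intervalIntegral.integral_Iic_sub_Iic integrable_stdGaussianPdf.integrableOn
    integrable_stdGaussianPdf.integrableOn

lemma hasDerivAt_stdGaussianCdf (z : ℝ) : HasDerivAt stdGaussianCdf (stdGaussianPdf z) z := by
  have hcdf : stdGaussianCdf = fun x => stdGaussianCdf 0 + ∫ u in 0..x, stdGaussianPdf u := by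
    funext x
    rw [← stdGaussianCdf_sub]
    ring
  rw [hcdf]
  exact (continuous_stdGaussianPdf.integral_hasStrictDerivAt 0 z).hasDerivAt.const_add _

lemma stdGaussianCdf_nonneg (z : ℝ) : 0 ≤ stdGaussianCdf z :=
  setIntegral_nonneg measurableSet_Iic fun u _ => (stdGaussianPdf_pos u).le

lemma stdGaussianCdf_le_one (z : ℝ) : stdGaussianCdf z ≤ 1 := by
  rw [← integral_gaussianPDFReal_eq_one 0 one_ne_zero, ← stdGaussianPdf_eq_gaussianPDFReal]
  exact setIntegral_le_integral integrable_stdGaussianPdf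
    (Eventually.of_forall fun u => (stdGaussianPdf_pos u).le)

lemma mul_stdGaussianPdf_le_cdf_sub {a b c : ℝ} (hab : a ≤ b)
    (hc : ∀ u ∈ Icc a b, |u| ≤ c) :
    (b - a) * stdGaussianPdf c ≤ stdGaussianCdf b - stdGaussianCdf a := by
  have h := intervalIntegral.integral_mono_on hab (intervalIntegrable_const (μ := volume))
    (continuous_stdGaussianPdf.intervalIntegrable a b)
    fun u hu => stdGaussianPdf_le_of_abs_le (hc u hu)
  rw [stdGaussianCdf_sub]
  simpa using h

lemma stdGaussianPdf_abs_add_one_le_cdf (z : ℝ) :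
    stdGaussianPdf (|z| + 1) ≤ stdGaussianCdf z := by
  have h := mul_stdGaussianPdf_le_cdf_sub (a := z - 1) (b := z) (c := |z| + 1) (by linarith)
    fun u hu => abs_le.2 ⟨by linarith [neg_abs_le z, hu.1], by linarith [le_abs_self z, hu.2]⟩
  linarith [stdGaussianCdf_nonneg (z - 1)]

lemma stdGaussianPdf_abs_add_one_le_one_sub_cdf (z : ℝ) :
    stdGaussianPdf (|z| + 1) ≤ 1 - stdGaussianCdf z := by
  have h := mul_stdGaussianPdf_le_cdf_sub (a := z) (b := z + 1) (c := |z| + 1) (by linarith)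
    fun u hu => abs_le.2 ⟨by linarith [neg_abs_le z, hu.1], by linarith [le_abs_self z, hu.2]⟩
  linarith [stdGaussianCdf_le_one (z + 1)]

lemma stdGaussianCdf_mem_Ioo (z : ℝ) : stdGaussianCdf z ∈ Ioo 0 1 :=
  ⟨(stdGaussianPdf_pos _).trans_le (stdGaussianPdf_abs_add_one_le_cdf z),
    by linarith [stdGaussianPdf_pos (|z| + 1), stdGaussianPdf_abs_add_one_le_one_sub_cdf z]⟩

lemma continuous_stdGaussianCdf : Continuous stdGaussianCdf :=
  continuous_iff_continuousAt.2 fun z => (hasDerivAt_stdGaussianCdf z).continuousAt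

lemma strictMono_stdGaussianCdf : StrictMono stdGaussianCdf :=
  strictMono_of_hasDerivAt_pos hasDerivAt_stdGaussianCdf stdGaussianPdf_pos

end Gaussian

section Weight

variable {w w' : ℝ → ℝ}

lemma AssumptionW.deriv_nonneg (hw : AssumptionW w w') {p : ℝ} (hp : p ∈ Icc 0 1) :
    0 ≤ w' p := by
  rw [← (hw.deriv p hp).derivWithin (uniqueDiffOn_Icc zero_lt_one p hp)]
  exact hw.mono.monotoneOn.derivWithin_nonneg

lemma AssumptionW.hasDerivAt (hw : AssumptionW w w') {p : ℝ} (hp : p ∈ Ioo 0 1) :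
    HasDerivAt w (w' p) p :=
  (hw.deriv p (Ioo_subset_Icc_self hp)).hasDerivAt (Icc_mem_nhds hp.1 hp.2)

noncomputable def distortedDensity (w' : ℝ → ℝ) (z : ℝ) : ℝ :=
  w' (stdGaussianCdf z) * stdGaussianPdf z

lemma distortedDensity_nonneg (hw : AssumptionW w w') (z : ℝ) : 0 ≤ distortedDensity w' z :=
  mul_nonneg (hw.deriv_nonneg (Ioo_subset_Icc_self (stdGaussianCdf_mem_Ioo z)))
    (stdGaussianPdf_pos z).le

lemma continuous_distortedDensity (hw : AssumptionW w w') : Continuous (distortedDensity w') :=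
  (hw.contDeriv.comp_continuous continuous_stdGaussianCdf
    fun z => Ioo_subset_Icc_self (stdGaussianCdf_mem_Ioo z)).mul continuous_stdGaussianPdf

lemma AssumptionW.hasDerivAt_comp_stdGaussianCdf (hw : AssumptionW w w') (z : ℝ) :
    HasDerivAt (fun z => w (stdGaussianCdf z)) (distortedDensity w' z) z :=
  (hw.hasDerivAt (stdGaussianCdf_mem_Ioo z)).comp z (hasDerivAt_stdGaussianCdf z)

/-- Both `Φ(z)` and `1 - Φ(z)` are at least `φ(|z| + 1)`, so the growth condition of (W) bounds
`w'(Φ(z))` by a multiple of `exp (β (|z| + 1)² / 2)` with `β = -α < 1`. -/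
lemma distortedDensity_le (hw : AssumptionW w w') :
    ∃ K, ∃ β < 1, ∀ z,
      distortedDensity w' z ≤ K * Real.exp ((β * (|z| + 1) ^ 2 - z ^ 2) / 2) := by
  obtain ⟨c, hc, α, hα, hgrowth⟩ := hw.growth
  set κ : ℝ := (Real.sqrt (2 * Real.pi))⁻¹
  refine ⟨2 * c * κ ^ α * κ, -α, by linarith [hα.1], fun z => ?_⟩
  have hΦ := stdGaussianCdf_mem_Ioo z
  have hφ := stdGaussianPdf_pos (|z| + 1)
  have hlow : stdGaussianCdf z ^ α ≤ stdGaussianPdf (|z| + 1) ^ α :=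
    Real.rpow_le_rpow_of_nonpos hφ (stdGaussianPdf_abs_add_one_le_cdf z) hα.2.le
  have hhigh : (1 - stdGaussianCdf z) ^ α ≤ stdGaussianPdf (|z| + 1) ^ α :=
    Real.rpow_le_rpow_of_nonpos hφ (stdGaussianPdf_abs_add_one_le_one_sub_cdf z) hα.2.le
  have hφα : stdGaussianPdf (|z| + 1) ^ α = κ ^ α * Real.exp (-α * (|z| + 1) ^ 2 / 2) := by
    rw [stdGaussianPdf, Real.mul_rpow (by positivity) (by positivity), ← Real.exp_mul]
    congr 2
    ring
  calc distortedDensity w' z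
      ≤ c * (stdGaussianPdf (|z| + 1) ^ α + stdGaussianPdf (|z| + 1) ^ α) *
          stdGaussianPdf z := by
        refine mul_le_mul_of_nonneg_right ((hgrowth _ hΦ).trans ?_) (stdGaussianPdf_pos z).le
        gcongr
    _ = 2 * c * κ ^ α * κ * Real.exp ((-α * (|z| + 1) ^ 2 - z ^ 2) / 2) := by
        rw [hφα, stdGaussianPdf, show (-α * (|z| + 1) ^ 2 - z ^ 2) / 2
          = -α * (|z| + 1) ^ 2 / 2 + -(z ^ 2) / 2 by ring, Real.exp_add]
        ring

lemma integrable_exp_mul_abs_mul_distortedDensity (hw : AssumptionW w w') (a : ℝ) :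
    Integrable fun z => Real.exp (a * |z|) * distortedDensity w' z := by
  obtain ⟨K, β, hβ, hK⟩ := distortedDensity_le hw
  set M := (a + β) ^ 2 / (1 - β) + β / 2 with hM
  have hexp (t : ℝ) : a * t + (β * (t + 1) ^ 2 - t ^ 2) / 2 ≤ M + -((1 - β) / 4) * t ^ 2 := by
    have h1β : 0 < 1 - β := by linarith
    have : (a + β) * t - (1 - β) / 4 * t ^ 2 ≤ (a + β) ^ 2 / (1 - β) := by
      rw [le_div_iff₀ h1β]
      nlinarith [sq_nonneg ((1 - β) * t - 2 * (a + β))]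
    rw [hM]
    linarith
  refine ((integrable_exp_neg_mul_sq (by linarith : 0 < (1 - β) / 4)).const_mul
    (|K| * Real.exp M)).mono' ?_ (Eventually.of_forall fun z => ?_)
  · exact (by fun_prop : Continuous fun z => Real.exp (a * |z|)).mul
      (continuous_distortedDensity hw) |>.aestronglyMeasurable
  · rw [Real.norm_eq_abs, abs_of_nonneg (mul_nonneg (Real.exp_pos _).le
      (distortedDensity_nonneg hw z))]
    calc Real.exp (a * |z|) * distortedDensity w' z
        ≤ Real.exp (a * |z|) * (|K| * Real.exp ((β * (|z| + 1) ^ 2 - z ^ 2) / 2)) := by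
          gcongr
          exact (hK z).trans (mul_le_mul_of_nonneg_right (le_abs_self K) (Real.exp_pos _).le)
      _ = |K| * Real.exp (a * |z| + (β * (|z| + 1) ^ 2 - |z| ^ 2) / 2) := by
          rw [sq_abs, Real.exp_add]; ring
      _ ≤ |K| * Real.exp (M + -((1 - β) / 4) * |z| ^ 2) :=
          mul_le_mul_of_nonneg_left (Real.exp_le_exp.2 (hexp |z|)) (abs_nonneg K)
      _ = |K| * Real.exp M * Real.exp (-((1 - β) / 4) * z ^ 2) := by
          rw [sq_abs, Real.exp_add]; ring

lemma hInt_eq_integral_exp_mul_distortedDensity (x : ℝ) :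
    hInt w' x = ∫ z, Real.exp (x * z) * distortedDensity w' z := by
  simp only [hInt, distortedDensity, mul_assoc]

lemma abs_mul_exp_mul_le {x y z : ℝ} (hy : |y - x| < 1) :
    |z * Real.exp (y * z)| ≤ Real.exp ((|x| + 2) * |z|) := by
  have hyz : y * z ≤ (|x| + 1) * |z| :=
    calc y * z ≤ |y| * |z| := by rw [← abs_mul]; exact le_abs_self _
      _ ≤ (|x| + 1) * |z| := by
        gcongr
        linarith [abs_sub_abs_le_abs_sub y x]
  calc |z * Real.exp (y * z)| = |z| * Real.exp (y * z) := by
        rw [abs_mul, abs_of_pos (Real.exp_pos _)]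
    _ ≤ Real.exp |z| * Real.exp ((|x| + 1) * |z|) := by
        gcongr
        linarith [Real.add_one_le_exp |z|]
    _ = Real.exp ((|x| + 2) * |z|) := by rw [← Real.exp_add]; ring_nf

lemma norm_mul_exp_mul_distortedDensity_le (hw : AssumptionW w w') {x y : ℝ} (hy : |y - x| < 1)
    (z : ℝ) : ‖z * (Real.exp (y * z) * distortedDensity w' z)‖ ≤
      Real.exp ((|x| + 2) * |z|) * distortedDensity w' z := by
  rw [← mul_assoc, Real.norm_eq_abs, abs_mul, abs_of_nonneg (distortedDensity_nonneg hw z)]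
  exact mul_le_mul_of_nonneg_right (abs_mul_exp_mul_le hy) (distortedDensity_nonneg hw z)

lemma continuous_exp_mul_mul_distortedDensity (hw : AssumptionW w w') (x : ℝ) :
    Continuous fun z => Real.exp (x * z) * distortedDensity w' z := by
  have := continuous_distortedDensity hw
  fun_prop

lemma integrable_exp_mul_mul_distortedDensity (hw : AssumptionW w w') (x : ℝ) :
    Integrable fun z => Real.exp (x * z) * distortedDensity w' z := by
  refine (integrable_exp_mul_abs_mul_distortedDensity hw |x|).mono'
    (continuous_exp_mul_mul_distortedDensity hw x).aestronglyMeasurable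
    (Eventually.of_forall fun z => ?_)
  rw [norm_mul, Real.norm_of_nonneg (Real.exp_pos _).le,
    Real.norm_of_nonneg (distortedDensity_nonneg hw z), ← abs_mul]
  exact mul_le_mul_of_nonneg_right (Real.exp_le_exp.2 (le_abs_self _))
    (distortedDensity_nonneg hw z)

lemma hasDerivAt_hInt (hw : AssumptionW w w') (x : ℝ) :
    HasDerivAt (hInt w') (∫ z, z * (Real.exp (x * z) * distortedDensity w' z)) x := by
  rw [funext (hInt_eq_integral_exp_mul_distortedDensity (w' := w'))]
  refine (hasDerivAt_integral_of_dominated_loc_of_deriv_le (Metric.ball_mem_nhds x one_pos)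
    (F' := fun y z => z * (Real.exp (y * z) * distortedDensity w' z))
    (bound := fun z => Real.exp ((|x| + 2) * |z|) * distortedDensity w' z)
    (Eventually.of_forall fun y =>
      (continuous_exp_mul_mul_distortedDensity hw y).aestronglyMeasurable)
    (integrable_exp_mul_mul_distortedDensity hw x)
    ((continuous_id.mul (continuous_exp_mul_mul_distortedDensity hw x)).aestronglyMeasurable)
    (Eventually.of_forall fun z y hy => norm_mul_exp_mul_distortedDensity_le hw
      (by simpa [Real.dist_eq] using hy) z)
    (integrable_exp_mul_abs_mul_distortedDensity hw _)
    (Eventually.of_forall fun z y _ => ?_)).2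
  exact ((hasDerivAt_mul_const z).exp.mul_const _).congr_deriv (by ring)

lemma continuous_deriv_hInt (hw : AssumptionW w w') : Continuous (deriv (hInt w')) := by
  rw [funext fun x => (hasDerivAt_hInt hw x).deriv, continuous_iff_continuousAt]
  intro x
  refine continuousAt_of_dominated
    (bound := fun z => Real.exp ((|x| + 2) * |z|) * distortedDensity w' z)
    (Eventually.of_forall fun y => ?_) ?_ (integrable_exp_mul_abs_mul_distortedDensity hw _)
    (Eventually.of_forall fun z => ?_)
  · exact (continuous_id.mul (continuous_exp_mul_mul_distortedDensity hw y)).aestronglyMeasurable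
  · filter_upwards [Metric.ball_mem_nhds x one_pos] with y hy
    exact Eventually.of_forall (norm_mul_exp_mul_distortedDensity_le hw
      (by simpa [Real.dist_eq] using hy))
  · fun_prop

lemma hInt_zero_pos (hw : AssumptionW w w') : 0 < hInt w' 0 := by
  have hint : Integrable (distortedDensity w') := by
    simpa using integrable_exp_mul_abs_mul_distortedDensity hw 0
  have hftc : ∫ z in (0 : ℝ)..1, distortedDensity w' z =
      w (stdGaussianCdf 1) - w (stdGaussianCdf 0) :=
    intervalIntegral.integral_eq_sub_of_hasDerivAt
      (fun z _ => hw.hasDerivAt_comp_stdGaussianCdf z)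
      ((continuous_distortedDensity hw).intervalIntegrable 0 1)
  have hmono : w (stdGaussianCdf 0) < w (stdGaussianCdf 1) :=
    hw.mono (Ioo_subset_Icc_self (stdGaussianCdf_mem_Ioo 0))
      (Ioo_subset_Icc_self (stdGaussianCdf_mem_Ioo 1)) (strictMono_stdGaussianCdf zero_lt_one)
  calc (0 : ℝ) < ∫ z in Ioc 0 1, distortedDensity w' z := by
        rw [← intervalIntegral.integral_of_le zero_le_one, hftc]
        linarith
    _ ≤ ∫ z, distortedDensity w' z :=
        setIntegral_le_integral hint (Eventually.of_forall (distortedDensity_nonneg hw))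
    _ = hInt w' 0 := by simp [hInt_eq_integral_exp_mul_distortedDensity]

end Weight

section Ode

lemma eventually_inv_sq_one_add_div_le {q : ℝ → ℝ} (hq : ContinuousAt q 0) (hq0 : q 0 ≠ 0) :
    ∀ᶠ r in 𝓝[≠] 0, ((1 + q r / r) ^ 2)⁻¹ ≤ 4 / q 0 ^ 2 * r ^ 2 := by
  have hlim : Tendsto (fun r => r + q r) (𝓝 0) (𝓝 (q 0)) := by
    simpa using tendsto_id.add hq
  have hfar : ∀ᶠ r in 𝓝 0, |q 0| / 2 < |r + q r| :=
    hlim.abs.eventually (lt_mem_nhds (by linarith [abs_pos.2 hq0]))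
  filter_upwards [self_mem_nhdsWithin, nhdsWithin_le_nhds hfar] with r (hr : r ≠ 0) hrq
  have hsq : q 0 ^ 2 / 4 ≤ (r + q r) ^ 2 := by
    have := pow_le_pow_left₀ (by positivity) hrq.le 2
    rwa [div_pow, sq_abs, sq_abs, show (2 : ℝ) ^ 2 = 4 by norm_num] at this
  have hpos : 0 < (r + q r) ^ 2 := lt_of_lt_of_le (by positivity) hsq
  rw [show 1 + q r / r = (r + q r) / r by field_simp, div_pow, inv_div, div_le_iff₀ hpos]
  calc r ^ 2 = 4 / q 0 ^ 2 * r ^ 2 * (q 0 ^ 2 / 4) := by field_simp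
    _ ≤ 4 / q 0 ^ 2 * r ^ 2 * (r + q r) ^ 2 := by gcongr

lemma mul_exp_le_mul_exp_of_hasDerivWithinAt_ge {Y Y' : ℝ → ℝ} {a b C : ℝ}
    (hY : ContinuousOn Y (Icc a b)) (hY' : ∀ t ∈ Ico a b, HasDerivWithinAt Y (Y' t) (Ici t) t)
    (hbound : ∀ t ∈ Ico a b, -(C * Y t) ≤ Y' t) :
    ∀ t ∈ Icc a b, Y a * Real.exp (C * a) ≤ Y t * Real.exp (C * t) :=
  image_le_of_deriv_right_le_deriv_boundary continuousOn_const
    (fun t _ => hasDerivWithinAt_const t _ _) le_rfl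
    (hY.mul (by fun_prop : Continuous fun t => Real.exp (C * t)).continuousOn)
    (fun t ht => (hY' t ht).mul ((hasDerivAt_const_mul C).exp.hasDerivWithinAt))
    fun t ht => by nlinarith [hbound t ht, Real.exp_pos (C * t)]

lemma tendsto_sqrt_nhdsGT_of_continuousWithinAt {Y : ℝ → ℝ} {a b : ℝ} (hab : a < b)
    (hY : ContinuousWithinAt Y (Icc a b) b) (hYb : Y b = 0) (hYpos : ∀ t ∈ Ico a b, 0 < Y t) :
    Tendsto (fun t => Real.sqrt (Y t)) (𝓝[<] b) (𝓝[>] 0) := by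
  have hlim : Tendsto Y (𝓝[<] b) (𝓝 0) := by
    rw [← nhdsWithin_Ico_eq_nhdsLT hab, ← hYb]
    exact hY.mono Ico_subset_Icc_self
  refine tendsto_nhdsWithin_iff.2 ⟨by simpa using hlim.sqrt, ?_⟩
  filter_upwards [Ico_mem_nhdsLT hab] with t ht
  exact Real.sqrt_pos.2 (hYpos t ht)

lemma exists_eventually_inv_sq_one_add_deriv_hInt_div_le {w w' : ℝ → ℝ}
    (hw : AssumptionW w w') (hd : deriv (hInt w') 0 ≠ 0) (γ : ℝ) :
    ∃ C, ∀ᶠ r in 𝓝[≠] 0,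
      ((1 + deriv (hInt w') (-γ * r) / (hInt w' (-γ * r) * r)) ^ 2)⁻¹ ≤ C * r ^ 2 := by
  set q : ℝ → ℝ := fun r => deriv (hInt w') (-γ * r) / hInt w' (-γ * r)
  have hh : hInt w' 0 ≠ 0 := (hInt_zero_pos hw).ne'
  have hlin : Continuous fun r : ℝ => -γ * r := by fun_prop
  have hq : ContinuousAt q 0 :=
    ((continuous_deriv_hInt hw).continuousAt.comp hlin.continuousAt).div
      ((hasDerivAt_hInt hw _).continuousAt.comp hlin.continuousAt) (by simpa using hh)
  have hq0 : q 0 ≠ 0 := by simpa [q] using div_ne_zero hd hh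
  refine ⟨4 / q 0 ^ 2, ?_⟩
  simpa only [q, div_div] using eventually_inv_sq_one_add_div_le hq hq0

end Ode

/-- if the autonomous ODE
`Y'(t) = −θ²[1 + h'(−γ√Y)/(h(−γ√Y)√Y)]⁻²`, `Y(T)=0`, admits a solution that is
positive on `[0,T)`, then `θ ≠ 0` and `h'(0) = 0`. -/
theorem stmt6 (w w' : ℝ → ℝ) (hw : AssumptionW w w')
    (T γ θ : ℝ) (hT : 0 < T)
    (Y : ℝ → ℝ)
    (hYcont : ContinuousOn Y (Set.Icc 0 T))
    (hYT : Y T = 0)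
    (hYpos : ∀ t ∈ Set.Ico 0 T, 0 < Y t)
    (hYode : ∀ t ∈ Set.Ico 0 T,
      HasDerivWithinAt Y
        (-(θ ^ 2 *
          ((1 + deriv (hInt w') (-γ * Real.sqrt (Y t)) /
              (hInt w' (-γ * Real.sqrt (Y t)) * Real.sqrt (Y t))) ^ 2)⁻¹))
        (Set.Ici t) t) :
    θ ≠ 0 ∧ deriv (hInt w') 0 = 0 := by
  refine ⟨fun hθ => ?_, ?_⟩
  · have hconst := constant_of_has_deriv_right_zero hYcont fun t ht => by
      simpa [hθ] using hYode t ht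
    linarith [hconst T (right_mem_Icc.2 hT.le), hYpos 0 ⟨le_rfl, hT⟩]
  by_contra hd
  obtain ⟨C, hC⟩ := exists_eventually_inv_sq_one_add_deriv_hInt_div_le hw hd γ
  have hnear := (tendsto_sqrt_nhdsGT_of_continuousWithinAt hT (hYcont T (right_mem_Icc.2 hT.le))
    hYT hYpos).eventually (hC.filter_mono (nhdsWithin_mono 0 fun r (hr : 0 < r) => hr.ne'))
  obtain ⟨t₀, ht₀T, hsub⟩ :=
    mem_nhdsLT_iff_exists_Ico_subset.1 (hnear.and (Ico_mem_nhdsLT hT))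
  have ht₀ : t₀ ∈ Ico 0 T := (hsub ⟨le_rfl, ht₀T⟩).2
  have hgrowth := mul_exp_le_mul_exp_of_hasDerivWithinAt_ge (C := θ ^ 2 * C)
    (hYcont.mono (Icc_subset_Icc_left ht₀.1)) (fun t ht => hYode t ⟨ht₀.1.trans ht.1, ht.2⟩)
    (fun t ht => ?_) T (right_mem_Icc.2 ht₀T.le)
  · rw [hYT, zero_mul] at hgrowth
    exact (mul_pos (hYpos t₀ ht₀) (Real.exp_pos _)).not_ge hgrowth
  obtain ⟨hbound, htT⟩ := hsub ht
  rw [Real.sq_sqrt (hYpos t htT).le] at hbound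
  rw [neg_le_neg_iff, mul_assoc]
  exact mul_le_mul_of_nonneg_left hbound (sq_nonneg θ)
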